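/- arXiv:2603.08287 — 5 statements merged into one kernel-verified Lean document; each statement's English description precedes it below -/
import Mathlib

section
/- Let d be a positive integer, σ > 0, and let ε be a random vector in the Euclidean space ℝ^d (with the Euclidean norm ‖·‖₂) whose law is the product over the d coordinates of the one-dimensional Gaussian measure with mean 0 and variance σ². Then for every u ≥ 2σ√d, one has P(‖ε‖₂ > u) ≤ exp(−u²/(8σ²)). -/
/-!
Chernoff bound for `‖ε‖² = ∑ εᵢ²` at `λ = 1 / (4σ²)`: a Gaussian integral gives
`E[exp (λ εᵢ²)] = (1 - 2λσ²)^(-1/2) = √2`, so by independence of the coordinates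
`P(‖ε‖ > u) ≤ 2^(d/2) exp (-u² / (4σ²))`. Finally `2^(d/2) ≤ exp (d/2) ≤ exp (u² / (8σ²))`
as soon as `u² ≥ 4σ²d`.
-/

open MeasureTheory ProbabilityTheory Real
open scoped NNReal

namespace ProbabilityTheory

lemma gaussianPDFReal_zero_mul_exp_mul_sq {v : ℝ≥0} (hv : v ≠ 0) (c x : ℝ) :
    gaussianPDFReal 0 v x * exp (c * x ^ 2) =
      (√(2 * π * v))⁻¹ * exp (-((2 * (v : ℝ))⁻¹ - c) * x ^ 2) := by
  have hv' : (v : ℝ) ≠ 0 := by exact_mod_cast hv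
  rw [gaussianPDFReal, mul_assoc, ← exp_add]
  congr 2
  field_simp
  ring

lemma integral_exp_mul_sq_gaussianReal {v : ℝ≥0} (hv : v ≠ 0) {c : ℝ} (hc : 2 * c * v < 1) :
    ∫ x, exp (c * x ^ 2) ∂gaussianReal 0 v = (√(1 - 2 * c * v))⁻¹ := by
  have hv' : (0 : ℝ) < v := by positivity
  simp_rw [integral_gaussianReal_eq_integral_smul hv, smul_eq_mul,
    gaussianPDFReal_zero_mul_exp_mul_sq hv, integral_const_mul, integral_gaussian]
  have : π / ((2 * (v : ℝ))⁻¹ - c) = (2 * π * v) / (1 - 2 * c * v) := by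
    field_simp
  rw [this, sqrt_div' _ (by linarith), div_eq_mul_inv, ← mul_assoc,
    inv_mul_cancel₀ (by positivity), one_mul]

lemma integral_exp_mul_sum_sq_pi_gaussianReal {ι : Type*} [Fintype ι] {v : ℝ≥0} (hv : v ≠ 0)
    {c : ℝ} (hc : 2 * c * v < 1) :
    ∫ x, exp (c * ∑ i, x i ^ 2) ∂Measure.pi (fun _ : ι ↦ gaussianReal 0 v) =
      (√(1 - 2 * c * v))⁻¹ ^ Fintype.card ι := by
  simp_rw [Finset.mul_sum, exp_sum]
  rw [integral_fintype_prod_eq_pow (fun y ↦ exp (c * y ^ 2)),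
    integral_exp_mul_sq_gaussianReal hv hc]

lemma HasLaw.mgf_sum_sq_of_pi_gaussianReal {ι Ω : Type*} [Fintype ι] {mΩ : MeasurableSpace Ω}
    {P : Measure Ω} {X : Ω → ι → ℝ} {v : ℝ≥0}
    (hX : HasLaw X (Measure.pi fun _ ↦ gaussianReal 0 v) P) (hv : v ≠ 0)
    {c : ℝ} (hc : 2 * c * v < 1) :
    mgf (fun ω ↦ ∑ i, X ω i ^ 2) P c = (√(1 - 2 * c * v))⁻¹ ^ Fintype.card ι := by
  rw [mgf, ← integral_exp_mul_sum_sq_pi_gaussianReal hv hc]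
  exact hX.integral_comp (f := fun x ↦ exp (c * ∑ i, x i ^ 2))
    (Measurable.aestronglyMeasurable (by fun_prop))

lemma HasLaw.measureReal_sum_sq_ge_le_of_pi_gaussianReal {ι Ω : Type*} [Fintype ι]
    {mΩ : MeasurableSpace Ω} {P : Measure Ω} {X : Ω → ι → ℝ} {v : ℝ≥0}
    (hX : HasLaw X (Measure.pi fun _ ↦ gaussianReal 0 v) P) (hv : v ≠ 0) (t : ℝ) :
    P.real {ω | t ≤ ∑ i, X ω i ^ 2} ≤ exp (-t / (4 * v)) * √2 ^ Fintype.card ι := by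
  have := hX.isFiniteMeasure
  have hv' : (0 : ℝ) < v := by positivity
  have hc : 2 * (4 * (v : ℝ))⁻¹ * v = 1 / 2 := by field_simp; norm_num
  have hmgf := hX.mgf_sum_sq_of_pi_gaussianReal hv (c := (4 * (v : ℝ))⁻¹) (by rw [hc]; norm_num)
  have hint : Integrable (fun ω ↦ exp ((4 * (v : ℝ))⁻¹ * ∑ i, X ω i ^ 2)) P :=
    .of_integral_ne_zero (by rw [← mgf, hmgf, hc]; norm_num)
  calc P.real {ω | t ≤ ∑ i, X ω i ^ 2}
      ≤ exp (-(4 * (v : ℝ))⁻¹ * t) * mgf (fun ω ↦ ∑ i, X ω i ^ 2) P (4 * (v : ℝ))⁻¹ :=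
        measure_ge_le_exp_mul_mgf t (by positivity) hint
    _ = exp (-t / (4 * v)) * √2 ^ Fintype.card ι := by
        rw [hmgf, hc, show (1 : ℝ) - 1 / 2 = 2⁻¹ by norm_num, sqrt_inv, inv_inv, neg_mul,
          ← div_eq_inv_mul, neg_div]

end ProbabilityTheory

lemma exp_neg_div_mul_sqrt_two_pow_le {d : ℕ} {s u : ℝ} (hs : 0 < s) (hu : 4 * s * d ≤ u ^ 2) :
    exp (-u ^ 2 / (4 * s)) * √2 ^ d ≤ exp (-u ^ 2 / (8 * s)) := by
  have hsqrt_two : √2 ≤ exp (1 / 2) := by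
    rw [exp_half]
    exact sqrt_le_sqrt (by linarith [add_one_le_exp (1 : ℝ)])
  have hd : (d : ℝ) / 2 ≤ u ^ 2 / (8 * s) := by
    rw [div_le_div_iff₀ (by norm_num) (by positivity)]
    linarith
  calc exp (-u ^ 2 / (4 * s)) * √2 ^ d
      ≤ exp (-u ^ 2 / (4 * s)) * exp (1 / 2) ^ d := by gcongr
    _ = exp (d / 2 - u ^ 2 / (4 * s)) := by
        rw [← exp_nat_mul, ← exp_add, neg_div]; ring_nf
    _ ≤ exp (-u ^ 2 / (8 * s)) := by
        gcongr
        have : u ^ 2 / (4 * s) = 2 * (u ^ 2 / (8 * s)) := by field_simp; ring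
        rw [this, neg_div]
        linarith

theorem stmt_2_general (d : ℕ) (σ : ℝ) (hσ : 0 < σ)
    {Ω : Type*} [MeasureSpace Ω] [IsProbabilityMeasure (ℙ : Measure Ω)]
    (ε : Ω → (Fin d → ℝ)) (hmeas : Measurable ε)
    (hlaw : Measure.map ε ℙ =
      Measure.pi (fun _ : Fin d => gaussianReal 0 ⟨σ ^ 2, sq_nonneg σ⟩)) :
    ∀ u : ℝ, 2 * σ * Real.sqrt d ≤ u →
      (ℙ {ω | u < Real.sqrt (∑ i, (ε ω i) ^ 2)}).toReal ≤
        Real.exp (-u ^ 2 / (8 * σ ^ 2)) := by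
  intro u hu
  have hX : HasLaw ε _ ℙ := ⟨hmeas.aemeasurable, hlaw⟩
  have hv : (⟨σ ^ 2, sq_nonneg σ⟩ : ℝ≥0) ≠ 0 :=
    NNReal.coe_ne_zero.mp (pow_ne_zero 2 hσ.ne')
  have hu₀ : 0 ≤ u := le_trans (by positivity) hu
  have hu₂ : 4 * σ ^ 2 * d ≤ u ^ 2 := by
    calc 4 * σ ^ 2 * d = (2 * σ * √d) ^ 2 := by rw [mul_pow, sq_sqrt d.cast_nonneg]; ring
      _ ≤ u ^ 2 := by gcongr
  calc (ℙ {ω | u < √(∑ i, ε ω i ^ 2)}).toReal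
      ≤ (ℙ : Measure Ω).real {ω | u ^ 2 ≤ ∑ i, ε ω i ^ 2} :=
        measureReal_mono fun ω hω ↦ ((lt_sqrt hu₀).mp hω).le
    _ ≤ exp (-u ^ 2 / (4 * σ ^ 2)) * √2 ^ d := by
        convert hX.measureReal_sum_sq_ge_le_of_pi_gaussianReal hv (u ^ 2)
        exacts [rfl, (Fintype.card_fin d).symm]
    _ ≤ exp (-u ^ 2 / (8 * σ ^ 2)) := exp_neg_div_mul_sqrt_two_pow_le (by positivity) hu₂

theorem stmt_2 (d : ℕ) (hd : 0 < d) (σ : ℝ) (hσ : 0 < σ)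
    {Ω : Type*} [MeasureSpace Ω] [IsProbabilityMeasure (ℙ : Measure Ω)]
    (ε : Ω → (Fin d → ℝ)) (hmeas : Measurable ε)
    (hlaw : Measure.map ε ℙ =
      Measure.pi (fun _ : Fin d => gaussianReal 0 ⟨σ ^ 2, sq_nonneg σ⟩)) :
    ∀ u : ℝ, 2 * σ * Real.sqrt d ≤ u →
      (ℙ {ω | u < Real.sqrt (∑ i, (ε ω i) ^ 2)}).toReal ≤
        Real.exp (-u ^ 2 / (8 * σ ^ 2)) :=
  stmt_2_general d σ hσ ε hmeas hlaw
end

section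
/- For every real number z > 0 and every real number y with 0 < y ≤ z/e, one has ∫₀^y √(log(z/x)) dx ≤ 2·y·√(log(z/y)). -/
theorem stmt_5 (z : ℝ) (hz : 0 < z) (y : ℝ) (hy0 : 0 < y) (hy : y ≤ z / Real.exp 1) :
    ∫ x in Set.Ioc (0 : ℝ) y, Real.sqrt (Real.log (z / x)) ≤
      2 * y * Real.sqrt (Real.log (z / y)) := by
  set L := Real.log (z / y) with hLdef
  have hL1 : 1 ≤ L := by
    have h1 : Real.exp 1 ≤ z / y := by
      rw [le_div_iff₀ hy0, mul_comm]
      exact (le_div_iff₀ (Real.exp_pos 1)).mp hy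
    calc (1 : ℝ) = Real.log (Real.exp 1) := (Real.log_exp 1).symm
      _ ≤ L := Real.log_le_log (Real.exp_pos 1) h1
  have hL0 : 0 ≤ L := by linarith
  set g : ℝ → ℝ := fun x => Real.sqrt L * Real.sqrt y * x ^ (-(1/2) : ℝ) with hg
  have hpt : ∀ x ∈ Set.Ioc (0:ℝ) y, Real.sqrt (Real.log (z / x)) ≤ g x := by
    intro x hx
    obtain ⟨hx0, hxy⟩ := hx
    have hzx : z / x = (z / y) * (y / x) := by field_simp
    have hlog : Real.log (z / x) = L + Real.log (y / x) := by
      rw [hzx, Real.log_mul (by positivity) (by positivity)]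
    have h2 : Real.log (y / x) ≤ y / x - 1 :=
      Real.log_le_sub_one_of_pos (div_pos hy0 hx0)
    have h3 : (1:ℝ) ≤ y / x := (one_le_div hx0).mpr hxy
    have hbound : Real.log (z / x) ≤ L * (y / x) := by
      rw [hlog]; nlinarith
    calc Real.sqrt (Real.log (z / x)) ≤ Real.sqrt (L * (y / x)) := Real.sqrt_le_sqrt hbound
      _ = g x := by
          simp only [hg]
          rw [Real.sqrt_mul hL0, Real.sqrt_div hy0.le, Real.rpow_neg hx0.le,
            ← Real.sqrt_eq_rpow, div_eq_mul_inv, mul_assoc]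
  have hgint : MeasureTheory.IntegrableOn g (Set.Ioc 0 y) := by
    have h := (intervalIntegral.intervalIntegrable_rpow' (a := 0) (b := y)
      (r := -(1/2)) (by norm_num)).const_mul (Real.sqrt L * Real.sqrt y)
    rwa [intervalIntegrable_iff_integrableOn_Ioc_of_le hy0.le] at h
  have key : ∫ x in Set.Ioc (0:ℝ) y, g x = 2 * y * Real.sqrt L := by
    rw [← intervalIntegral.integral_of_le hy0.le]
    simp only [hg]
    rw [intervalIntegral.integral_const_mul, integral_rpow (Or.inl (by norm_num)),
      Real.zero_rpow (by norm_num), show (-(1/2) : ℝ) + 1 = 1/2 by norm_num,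
      ← Real.sqrt_eq_rpow, sub_zero]
    have hyy : Real.sqrt y * Real.sqrt y = y := Real.mul_self_sqrt hy0.le
    field_simp
    nlinarith [Real.sqrt_nonneg L, Real.sqrt_nonneg y]
  by_cases hf : MeasureTheory.IntegrableOn
      (fun x => Real.sqrt (Real.log (z / x))) (Set.Ioc 0 y) MeasureTheory.volume
  · calc ∫ x in Set.Ioc (0:ℝ) y, Real.sqrt (Real.log (z / x))
        ≤ ∫ x in Set.Ioc (0:ℝ) y, g x :=
          MeasureTheory.setIntegral_mono_on hf hgint measurableSet_Ioc hpt
      _ = 2 * y * Real.sqrt L := key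
  · rw [MeasureTheory.integral_undef hf]
    positivity
end

section
/- Let d be a positive integer and let c : ℝ^d × ℝ^d → ℝ be a symmetric kernel for which there exist constants L > 0 and α ∈ (0, 1] such that |c(x, y) − c(x, z)| ≤ L·‖y − z‖₂^α for all x, y, z ∈ ℝ^d. Let R̃ > 0 and 0 < ε ≤ R̃, let B ⊆ ℝ^d be a finite set of cardinality at most (1 + 2R̃/ε)^d such that every point of the closed Euclidean ball of radius R̃ centered at the origin lies within Euclidean distance ε of some point of B, and let ω be the map sending each x in that ball to a closest point of B (ties broken arbitrarily), so that ‖x − ω(x)‖₂ ≤ ε. Define c̃(x, y) := c(ω(x), ω(y)) − c(ω(x), y) − c(x, ω(y)) + c(x, y) and d_{c̃}(x, y) := √(c̃(x,x) − 2·c̃(x,y) + c̃(y,y)) (with √ the real square root, equal to 0 on negative inputs). Then for every δ with 0 < δ ≤ √(8·L·ε^α), there exists a finite set M of cardinality at most (7·L^{1/2}·R̃^{α/2}/δ)^{2d/α} such that every x in the closed ball of radius R̃ has some y ∈ M with d_{c̃}(x, y) ≤ δ. -/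
/-!
Points with the same image under `ω` make the `ω`-terms of `c̃` cancel, so on such a pair the
square of `d_c̃` is `c(x,x) - c(x,y) + c(y,y) - c(y,x) ≤ 2 L ‖x - y‖^α`. It therefore suffices to
take, inside each fibre `ω⁻¹(b)` (which lies in the `ε`-ball around `b`), an `r`-net with
`2 L r^α = δ²`. A maximal `r`-separated subset is such a net, and comparing volumes of disjoint
`r/2`-balls bounds its size by `(1 + 2ε/r)^d`; the constraint `δ² ≤ 8 L ε^α` then turns
`(1 + 2R̃/ε)^d (1 + 2ε/r)^d` into the stated bound.
-/

open Metric MeasureTheory Finset Module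

section Packing

variable {E : Type*} [NormedAddCommGroup E] [NormedSpace ℝ E] [FiniteDimensional ℝ E]

theorem card_le_of_pairwise_lt_dist {s : Finset E} {x : E} {ε r : ℝ} (hε : 0 ≤ ε) (hr : 0 < r)
    (hs : ↑s ⊆ closedBall x ε) (hsep : (s : Set E).Pairwise (r < dist · ·)) :
    (#s : ℝ) ≤ (1 + 2 * ε / r) ^ finrank ℝ E := by
  borelize E
  set μ : Measure E := Measure.addHaar
  set n := finrank ℝ E
  have hV : 0 < μ.real (ball 0 1) :=
    ENNReal.toReal_pos (measure_ball_pos μ 0 one_pos).ne' measure_ball_lt_top.ne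
  have hdisj : (s : Set E).PairwiseDisjoint (closedBall · (r / 2)) := fun u hu v hv huv =>
    closedBall_disjoint_closedBall (by linarith [hsep hu hv huv])
  have hsub : (⋃ y ∈ s, closedBall y (r / 2)) ⊆ closedBall x (ε + r / 2) :=
    Set.iUnion₂_subset fun y hy =>
      closedBall_subset_closedBall' (by linarith [mem_closedBall.1 (hs hy)])
  have hvol : #s * ((r / 2) ^ n * μ.real (ball 0 1)) ≤ (ε + r / 2) ^ n * μ.real (ball 0 1) := by
    calc #s * ((r / 2) ^ n * μ.real (ball 0 1))
        = μ.real (⋃ y ∈ s, closedBall y (r / 2)) := by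
          rw [measureReal_biUnion_finset hdisj (fun _ _ => measurableSet_closedBall)
            fun _ _ => measure_closedBall_lt_top.ne]
          simp [Measure.addHaar_real_closedBall μ _ (by positivity : 0 ≤ r / 2), n]
      _ ≤ μ.real (closedBall x (ε + r / 2)) := measureReal_mono hsub measure_closedBall_lt_top.ne
      _ = (ε + r / 2) ^ n * μ.real (ball 0 1) := Measure.addHaar_real_closedBall μ _ (by positivity)
  have hpow : (ε + r / 2) ^ n = (1 + 2 * ε / r) ^ n * (r / 2) ^ n := by
    rw [← mul_pow]; congr 1; field_simp; ring
  rw [hpow, ← mul_assoc] at hvol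
  exact le_of_mul_le_mul_right (le_of_mul_le_mul_right hvol hV) (by positivity)

theorem exists_finset_subset_card_le_forall_dist_le {A : Set E} {x : E} {ε r : ℝ}
    (hε : 0 ≤ ε) (hr : 0 < r) (hA : A ⊆ closedBall x ε) :
    ∃ t : Finset E, ↑t ⊆ A ∧ (#t : ℝ) ≤ (1 + 2 * ε / r) ^ finrank ℝ E ∧
      ∀ y ∈ A, ∃ z ∈ t, dist y z ≤ r := by
  classical
  set S : Set ℕ := {n | ∃ t : Finset E, ↑t ⊆ A ∧ (t : Set E).Pairwise (r < dist · ·) ∧ #t = n}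
  have hS_le : ∀ n ∈ S, (n : ℝ) ≤ (1 + 2 * ε / r) ^ finrank ℝ E := by
    rintro _ ⟨t, htA, hsep, rfl⟩
    exact card_le_of_pairwise_lt_dist hε hr (htA.trans hA) hsep
  have hS_bdd : BddAbove S :=
    ⟨⌈(1 + 2 * ε / r) ^ finrank ℝ E⌉₊, fun n hn =>
      Nat.cast_le.1 ((hS_le n hn).trans (Nat.le_ceil _))⟩
  obtain ⟨t, htA, hsep, hcard⟩ := Nat.sSup_mem (⟨0, ∅, by simp⟩ : S.Nonempty) hS_bdd
  refine ⟨t, htA, hcard ▸ hS_le _ ⟨t, htA, hsep, hcard⟩, fun y hy => ?_⟩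
  by_contra! hfar
  have hyt : y ∉ t := fun h => by simpa [hr.not_gt] using hfar y h
  have hsep' : (↑(insert y t) : Set E).Pairwise (r < dist · ·) := by
    rw [coe_insert]
    exact hsep.insert fun z hz _ => ⟨hfar z hz, dist_comm y z ▸ hfar z hz⟩
  have hins : #(insert y t) ∈ S :=
    ⟨insert y t, by simpa [Set.insert_subset_iff] using ⟨hy, htA⟩, hsep', rfl⟩
  have := le_csSup hS_bdd hins
  rw [card_insert_of_notMem hyt] at this
  omega

theorem exists_finset_card_le_forall_exists_map_eq_dist_le {K : Set E} {B : Finset E}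
    {ω : E → E} {ε r : ℝ} (hε : 0 ≤ ε) (hr : 0 < r) (hωB : ∀ x ∈ K, ω x ∈ B)
    (hω : ∀ x ∈ K, dist x (ω x) ≤ ε) :
    ∃ M : Finset E, (#M : ℝ) ≤ #B * (1 + 2 * ε / r) ^ finrank ℝ E ∧
      ∀ x ∈ K, ∃ y ∈ M, ω y = ω x ∧ dist x y ≤ r := by
  classical
  have hfiber (b : E) : {x ∈ K | ω x = b} ⊆ closedBall b ε := fun x ⟨hx, hxb⟩ => hxb ▸ hω x hx
  choose T hTsub hTcard hTnet using fun b =>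
    exists_finset_subset_card_le_forall_dist_le hε hr (hfiber b)
  refine ⟨B.biUnion T, ?_, fun x hx => ?_⟩
  · calc (#(B.biUnion T) : ℝ) ≤ ∑ b ∈ B, (#(T b) : ℝ) := mod_cast card_biUnion_le
      _ ≤ #B * (1 + 2 * ε / r) ^ finrank ℝ E := by
        simpa using sum_le_sum fun b _ => hTcard b
  · obtain ⟨y, hyT, hxy⟩ := hTnet (ω x) x ⟨hx, rfl⟩
    exact ⟨y, mem_biUnion.2 ⟨ω x, hωB x hx, hyT⟩, (hTsub (ω x) hyT).2, hxy⟩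

end Packing

/-- The "discretization" kernel `c̃` associated with a kernel `c` and a map `ω`. -/
noncomputable def ctilde {E : Type*} (c : E → E → ℝ) (ω : E → E) (x y : E) : ℝ :=
  c (ω x) (ω y) - c (ω x) y - c x (ω y) + c x y

theorem ctilde_sub_two_mul_add_le_of_map_eq {F : Type*} [SeminormedAddCommGroup F] {c : F → F → ℝ}
    {ω : F → F} {L α : ℝ} (hsymm : ∀ x y, c x y = c y x)
    (hc : ∀ x y z, |c x y - c x z| ≤ L * ‖y - z‖ ^ α) {x y : F} (hxy : ω y = ω x) :
    ctilde c ω x x - 2 * ctilde c ω x y + ctilde c ω y y ≤ 2 * L * ‖x - y‖ ^ α := by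
  have hxx : c x x - c x y ≤ L * ‖x - y‖ ^ α := (le_abs_self _).trans (hc x x y)
  have hyy : c y y - c y x ≤ L * ‖x - y‖ ^ α := norm_sub_rev y x ▸ (le_abs_self _).trans (hc y y x)
  have hsum : ctilde c ω x x - 2 * ctilde c ω x y + ctilde c ω y y
      = (c x x - c x y) + (c y y - c y x) := by
    unfold ctilde
    rw [hxy]
    linear_combination hsymm y x + hsymm x (ω x) + hsymm (ω x) y
  linarith

theorem three_mul_eight_rpow_add_six_mul_two_rpow_le {β : ℝ} (hβ : 1 ≤ β) :
    3 * 8 ^ β + 6 * 2 ^ β ≤ (49 : ℝ) ^ β := by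
  have hle (a : ℝ) (ha : 0 ≤ a) (ha49 : a ≤ 49) : a ^ β ≤ 49 ^ β * (a / 49) := by
    calc a ^ β = 49 ^ β * (a / 49) ^ β := by
          rw [← Real.mul_rpow (by norm_num) (by positivity)]; congr 1; ring
      _ ≤ 49 ^ β * (a / 49) := by
          gcongr
          exact Real.rpow_le_self_of_le_one (by positivity) (by linarith) hβ
  linarith [hle 8 (by norm_num) (by norm_num), hle 2 (by norm_num) (by norm_num),
    Real.rpow_nonneg (by norm_num : (0 : ℝ) ≤ 49) β]

theorem one_add_two_mul_div_mul_one_add_two_mul_div_le {L α R ε δ : ℝ} (hL : 0 < L) (hα0 : 0 < α)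
    (hα1 : α ≤ 1) (hε : 0 < ε) (hεR : ε ≤ R) (hδ : 0 < δ) (hδε : δ ^ 2 ≤ 8 * L * ε ^ α) :
    (1 + 2 * R / ε) * (1 + 2 * ε / (δ ^ 2 / (2 * L)) ^ α⁻¹)
      ≤ (7 * L ^ ((1 : ℝ) / 2) * R ^ (α / 2) / δ) ^ (2 / α) := by
  have hR : 0 < R := hε.trans_le hεR
  set β := α⁻¹
  have hβ : 1 ≤ β := one_le_inv₀ hα0 |>.2 hα1
  set t := (δ ^ 2 / L) ^ β
  have ht : 0 < t := by positivity
  have hr : (δ ^ 2 / (2 * L)) ^ β = t / 2 ^ β := by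
    rw [← Real.div_rpow (by positivity) (by norm_num)]; congr 1; ring
  have hεt : t / 8 ^ β ≤ ε := by
    calc t / 8 ^ β = (δ ^ 2 / L / 8) ^ β := (Real.div_rpow (by positivity) (by norm_num) _).symm
      _ ≤ (ε ^ α) ^ β := by
          gcongr
          rw [div_div, div_le_iff₀ (by positivity)]
          linarith
      _ = ε := Real.rpow_rpow_inv hε.le hα0.ne'
  have hW : (7 * L ^ ((1 : ℝ) / 2) * R ^ (α / 2) / δ) ^ (2 / α) = 49 ^ β * R / t := by
    have hW2 : (7 * L ^ ((1 : ℝ) / 2) * R ^ (α / 2) / δ) ^ 2 = 49 * R ^ α / (δ ^ 2 / L) := by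
      have hL2 : (L ^ ((1 : ℝ) / 2)) ^ 2 = L := by
        rw [← Real.rpow_natCast, ← Real.rpow_mul hL.le]; norm_num
      have hR2 : (R ^ (α / 2)) ^ 2 = R ^ α := by
        rw [← Real.rpow_natCast, ← Real.rpow_mul hR.le]; norm_num
      rw [div_pow, mul_pow, mul_pow, hL2, hR2]
      field_simp
      norm_num
    rw [show 2 / α = (2 : ℝ) * β from div_eq_mul_inv 2 α, Real.rpow_mul (by positivity),
      Real.rpow_two, hW2, Real.div_rpow (by positivity) (by positivity),
      Real.mul_rpow (by norm_num) (by positivity),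
      Real.rpow_rpow_inv hR.le hα0.ne']
  have hfst : 1 + 2 * R / ε ≤ 3 * R / ε := by
    have : 1 ≤ R / ε := (one_le_div hε).2 hεR
    rw [mul_div_assoc, mul_div_assoc]; linarith
  rw [hr, hW]
  calc (1 + 2 * R / ε) * (1 + 2 * ε / (t / 2 ^ β))
      ≤ 3 * R / ε * (1 + 2 * ε / (t / 2 ^ β)) := by gcongr
    _ = 3 * R / ε + 6 * R / (t / 2 ^ β) := by field_simp; ring
    _ ≤ 3 * R / (t / 8 ^ β) + 6 * R / (t / 2 ^ β) := by gcongr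
    _ = R * (3 * 8 ^ β + 6 * 2 ^ β) / t := by field_simp
    _ ≤ 49 ^ β * R / t := by
        rw [mul_comm (49 ^ β) R]
        gcongr
        exact three_mul_eight_rpow_add_six_mul_two_rpow_le hβ

theorem stmt_10_general (d : ℕ)
    (c : EuclideanSpace ℝ (Fin d) → EuclideanSpace ℝ (Fin d) → ℝ)
    (hsymm : ∀ x y, c x y = c y x)
    (L α : ℝ) (hL : 0 < L) (hα : α ∈ Set.Ioc (0 : ℝ) 1)
    (hc : ∀ x y z : EuclideanSpace ℝ (Fin d), |c x y - c x z| ≤ L * ‖y - z‖ ^ α)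
    (Rt : ℝ) (ε : ℝ) (hε0 : 0 < ε) (hεR : ε ≤ Rt)
    (B : Finset (EuclideanSpace ℝ (Fin d)))
    (hBcard : (B.card : ℝ) ≤ (1 + 2 * Rt / ε) ^ d)
    (hBcover : ∀ x ∈ Metric.closedBall (0 : EuclideanSpace ℝ (Fin d)) Rt,
      ∃ b ∈ B, ‖x - b‖ ≤ ε)
    (ω : EuclideanSpace ℝ (Fin d) → EuclideanSpace ℝ (Fin d))
    (hωB : ∀ x ∈ Metric.closedBall (0 : EuclideanSpace ℝ (Fin d)) Rt, ω x ∈ B)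
    (hωnear : ∀ x ∈ Metric.closedBall (0 : EuclideanSpace ℝ (Fin d)) Rt,
      ∀ b ∈ B, ‖x - ω x‖ ≤ ‖x - b‖) :
    ∀ δ : ℝ, 0 < δ → δ ≤ Real.sqrt (8 * L * ε ^ α) →
      ∃ M : Finset (EuclideanSpace ℝ (Fin d)),
        (M.card : ℝ) ≤ (7 * L ^ ((1 : ℝ) / 2) * Rt ^ (α / 2) / δ) ^ (2 * (d : ℝ) / α) ∧
        ∀ x ∈ Metric.closedBall (0 : EuclideanSpace ℝ (Fin d)) Rt,
          ∃ y ∈ M,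
            Real.sqrt (ctilde c ω x x - 2 * ctilde c ω x y + ctilde c ω y y) ≤ δ := by
  intro δ hδ hδε
  have hR : 0 < Rt := hε0.trans_le hεR
  obtain ⟨hα0, hα1⟩ := hα
  have hδε' : δ ^ 2 ≤ 8 * L * ε ^ α := (Real.le_sqrt hδ.le (by positivity)).1 hδε
  have hωdist : ∀ x ∈ closedBall 0 Rt, dist x (ω x) ≤ ε := fun x hx => by
    obtain ⟨b, hb, hxb⟩ := hBcover x hx
    exact (dist_eq_norm x (ω x)).trans_le ((hωnear x hx b hb).trans hxb)
  set r := (δ ^ 2 / (2 * L)) ^ α⁻¹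
  have hrα : r ^ α = δ ^ 2 / (2 * L) := Real.rpow_inv_rpow (by positivity) hα0.ne'
  obtain ⟨M, hMcard, hMnet⟩ :=
    exists_finset_card_le_forall_exists_map_eq_dist_le (r := r) hε0.le (by positivity) hωB hωdist
  refine ⟨M, ?_, fun x hx => ?_⟩
  · rw [finrank_euclideanSpace_fin] at hMcard
    calc (#M : ℝ) ≤ ((1 + 2 * Rt / ε) * (1 + 2 * ε / r)) ^ d := by
          rw [mul_pow]; exact hMcard.trans (mul_le_mul_of_nonneg_right hBcard (by positivity))
      _ ≤ ((7 * L ^ ((1 : ℝ) / 2) * Rt ^ (α / 2) / δ) ^ (2 / α)) ^ d := by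
          gcongr
          exact one_add_two_mul_div_mul_one_add_two_mul_div_le hL hα0 hα1 hε0 hεR hδ hδε'
      _ = _ := by
          rw [← Real.rpow_natCast, ← Real.rpow_mul (by positivity)]
          ring_nf
  · obtain ⟨y, hyM, hωy, hxy⟩ := hMnet x hx
    refine ⟨y, hyM, Real.sqrt_le_iff.2 ⟨hδ.le, ?_⟩⟩
    calc ctilde c ω x x - 2 * ctilde c ω x y + ctilde c ω y y ≤ 2 * L * ‖x - y‖ ^ α :=
          ctilde_sub_two_mul_add_le_of_map_eq hsymm hc hωy
      _ ≤ 2 * L * r ^ α := by gcongr; rwa [← dist_eq_norm]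
      _ = δ ^ 2 := by rw [hrα]; field_simp

theorem stmt_10 (d : ℕ) (hd : 0 < d)
    (c : EuclideanSpace ℝ (Fin d) → EuclideanSpace ℝ (Fin d) → ℝ)
    (hsymm : ∀ x y, c x y = c y x)
    (L α : ℝ) (hL : 0 < L) (hα : α ∈ Set.Ioc (0 : ℝ) 1)
    (hc : ∀ x y z : EuclideanSpace ℝ (Fin d), |c x y - c x z| ≤ L * ‖y - z‖ ^ α)
    (Rt : ℝ) (hRt : 0 < Rt) (ε : ℝ) (hε0 : 0 < ε) (hεR : ε ≤ Rt)
    (B : Finset (EuclideanSpace ℝ (Fin d)))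
    (hBcard : (B.card : ℝ) ≤ (1 + 2 * Rt / ε) ^ d)
    (hBcover : ∀ x ∈ Metric.closedBall (0 : EuclideanSpace ℝ (Fin d)) Rt,
      ∃ b ∈ B, ‖x - b‖ ≤ ε)
    (ω : EuclideanSpace ℝ (Fin d) → EuclideanSpace ℝ (Fin d))
    (hωB : ∀ x ∈ Metric.closedBall (0 : EuclideanSpace ℝ (Fin d)) Rt, ω x ∈ B)
    (hωnear : ∀ x ∈ Metric.closedBall (0 : EuclideanSpace ℝ (Fin d)) Rt,
      ∀ b ∈ B, ‖x - ω x‖ ≤ ‖x - b‖) :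
    ∀ δ : ℝ, 0 < δ → δ ≤ Real.sqrt (8 * L * ε ^ α) →
      ∃ M : Finset (EuclideanSpace ℝ (Fin d)),
        (M.card : ℝ) ≤ (7 * L ^ ((1 : ℝ) / 2) * Rt ^ (α / 2) / δ) ^ (2 * (d : ℝ) / α) ∧
        ∀ x ∈ Metric.closedBall (0 : EuclideanSpace ℝ (Fin d)) Rt,
          ∃ y ∈ M,
            Real.sqrt (ctilde c ω x x - 2 * ctilde c ω x y + ctilde c ω y y) ≤ δ :=
  stmt_10_general d c hsymm L α hL hα hc Rt ε hε0 hεR B hBcard hBcover ω hωB hωnear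
end

section
/- Let d and m be positive integers, let C > 0, σ > 0, L > 0 and α ∈ (0, 1], and let c : ℝ^d × ℝ^d → ℝ be a symmetric kernel that is positive semidefinite (for every finite tuple of points z_1, …, z_k ∈ ℝ^d the k×k matrix with entries c(z_i, z_j) is positive semidefinite), satisfies c(x, x) ≤ C for all x, and satisfies |c(x, y) − c(x, z)| ≤ L·‖y − z‖₂^α for all x, y, z. Fix points z_1, …, z_m ∈ ℝ^d, let C_m be the m×m matrix with entries (C_m)_{ij} = c(z_i, z_j), and for x ∈ ℝ^d let c_m(x) ∈ ℝ^m be the vector with entries c(x, z_i). Define the posterior predictive variance σ_m²(x) := c(x, x) − c_m(x)ᵀ·(C_m + σ²·I)^{−1}·c_m(x). Then for all x, y ∈ ℝ^d, |σ_m²(x) − σ_m²(y)| ≤ 2·√(2·C·L)·‖x − y‖₂^{α/2}. -/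
/-!
The posterior covariance `k x y = c x y - c_m(x)ᵀ (C_m + σ² I)⁻¹ c_m(y)` is again a positive
semidefinite kernel: its Gram matrix at any finite family of points is the Schur complement of the
(positive semidefinite) Gram matrix of the `z i` and those points, with `σ² I` added to the
`z`-block. Hence `k x y ≤ √(k x x) √(k y y)`, so with `u = √(k x x)` and `v = √(k y y)`,
`(u - v)² ≤ k x x - k x y - k y x + k y y`. As `c - k` is a positive semidefinite form, this is
at most `c x x - c x y - c y x + c y y ≤ 2 L ‖x - y‖ ^ α`. Finally `|u² - v²| = |u - v| (u + v)`
and `u + v ≤ 2 √C`.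
-/

open Matrix

/-- The Gaussian process posterior predictive variance at `x`, given observation
points `z 0, …, z (m-1)`, kernel `c` and noise standard deviation `σ`. -/
noncomputable def postVar {E : Type*} (m : ℕ) (σ : ℝ) (c : E → E → ℝ)
    (z : Fin m → E) (x : E) : ℝ :=
  c x x -
    (fun i => c x (z i)) ⬝ᵥ
      (((Matrix.of fun i j => c (z i) (z j)) + σ ^ 2 • (1 : Matrix (Fin m) (Fin m) ℝ))⁻¹
        *ᵥ fun i => c x (z i))

theorem Matrix.PosSemidef.apply_zero_one_le_sqrt_mul {M : Matrix (Fin 2) (Fin 2) ℝ}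
    (hM : M.PosSemidef) : M 0 1 ≤ √(M 0 0) * √(M 1 1) := by
  have hsymm : M 1 0 = M 0 1 := by simpa using congrFun (congrFun hM.isHermitian 0) 1
  have hdet := hM.det_nonneg
  rw [det_fin_two, hsymm] at hdet
  rw [← Real.sqrt_mul hM.diag_nonneg]
  exact (le_abs_self _).trans (Real.abs_le_sqrt (by nlinarith))

theorem Matrix.PosSemidef.abs_sub_diag_le {M : Matrix (Fin 2) (Fin 2) ℝ} (hM : M.PosSemidef) :
    |M 0 0 - M 1 1| ≤ (√(M 0 0) + √(M 1 1)) * √(M 0 0 - M 0 1 - M 1 0 + M 1 1) := by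
  have hsymm : M 1 0 = M 0 1 := by simpa using congrFun (congrFun hM.isHermitian 0) 1
  set u := √(M 0 0)
  set v := √(M 1 1)
  have hu : u ^ 2 = M 0 0 := Real.sq_sqrt hM.diag_nonneg
  have hv : v ^ 2 = M 1 1 := Real.sq_sqrt hM.diag_nonneg
  have hsum : 0 ≤ u + v := by positivity
  have hdiff : |u - v| ≤ √(M 0 0 - M 0 1 - M 1 0 + M 1 1) := by
    apply Real.abs_le_sqrt
    nlinarith [hM.apply_zero_one_le_sqrt_mul]
  calc |M 0 0 - M 1 1| = |u - v| * (u + v) := by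
        rw [← hu, ← hv, ← abs_of_nonneg hsum, ← abs_mul]; ring_nf
    _ ≤ _ := by rw [mul_comm]; exact mul_le_mul_of_nonneg_left hdiff hsum

variable {E : Type*}

def IsPosSemidefKernel (c : E → E → ℝ) : Prop :=
  ∀ (k : ℕ) (z : Fin k → E), (of fun i j => c (z i) (z j)).PosSemidef

noncomputable def postCov {ι : Type*} [Fintype ι] [DecidableEq ι] (σ : ℝ) (c : E → E → ℝ)
    (z : ι → E) (x y : E) : ℝ :=
  c x y -
    (fun i => c x (z i)) ⬝ᵥ
      (((of fun i j => c (z i) (z j)) + σ ^ 2 • (1 : Matrix ι ι ℝ))⁻¹ *ᵥ fun i => c y (z i))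

theorem postVar_eq_postCov {m : ℕ} {σ : ℝ} {c : E → E → ℝ} (z : Fin m → E) (x : E) :
    postVar m σ c z x = postCov σ c z x x :=
  rfl

namespace IsPosSemidefKernel

variable {c : E → E → ℝ}

theorem gram (hc : IsPosSemidefKernel c) {ι : Type*} [Fintype ι] (w : ι → E) :
    (of fun i j => c (w i) (w j)).PosSemidef := by
  let e := Fintype.equivFin ι
  convert (hc _ (w ∘ e.symm)).submatrix e
  ext
  simp

theorem self_nonneg (hc : IsPosSemidefKernel c) (x : E) : 0 ≤ c x x := by
  simpa using (hc.gram fun _ : Unit => x).diag_nonneg (i := ())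

theorem symm (hc : IsPosSemidefKernel c) (x y : E) : c x y = c y x := by
  simpa using congrFun (congrFun (hc.gram ![x, y]).isHermitian 1) 0

theorem posDef_gram_add (hc : IsPosSemidefKernel c) {ι : Type*} [Fintype ι] [DecidableEq ι]
    {σ : ℝ} (hσ : σ ≠ 0) (z : ι → E) :
    ((of fun i j => c (z i) (z j)) + σ ^ 2 • (1 : Matrix ι ι ℝ)).PosDef :=
  PosDef.posSemidef_add (hc.gram z) (PosDef.one.smul (by positivity))

theorem posSemidef_postCov (hc : IsPosSemidefKernel c) {ι κ : Type*} [Fintype ι] [DecidableEq ι]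
    [Fintype κ] {σ : ℝ} (hσ : σ ≠ 0) (z : ι → E) (w : κ → E) :
    (of fun j l => postCov σ c z (w j) (w l)).PosSemidef := by
  set A := (of fun i j => c (z i) (z j)) + σ ^ 2 • (1 : Matrix ι ι ℝ)
  have hA : A.PosDef := hc.posDef_gram_add hσ z
  have := hA.isUnit.invertible
  let B : Matrix ι κ ℝ := of fun i j => c (z i) (w j)
  let D : Matrix κ κ ℝ := of fun j l => c (w j) (w l)
  have hblock : (fromBlocks A B Bᴴ D).PosSemidef := by
    classical
    have hsplit : fromBlocks A B Bᴴ D = (of fun p q => c (Sum.elim z w p) (Sum.elim z w q)) +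
        diagonal (Sum.elim (fun _ => σ ^ 2) 0) := by
      ext (i | j) (k | l) <;> simp [A, B, D, one_apply, diagonal_apply, hc.symm (z _) (w _)]
    rw [hsplit]
    exact (hc.gram _).add (posSemidef_diagonal_iff.mpr fun p => by cases p <;> simp [sq_nonneg])
  have hschur : (of fun j l => postCov σ c z (w j) (w l)) = D - Bᴴ * A⁻¹ * B := by
    ext j l
    simp only [postCov, dotProduct, mulVec, Finset.mul_sum, Finset.sum_mul, of_apply,
      Matrix.sub_apply, mul_apply, conjTranspose_eq_transpose_of_trivial, transpose_apply,
      sub_right_inj, hc.symm (z _) (w _), A, B, D]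
    rw [Finset.sum_comm]
    simp only [mul_assoc]
  exact hschur ▸ (PosDef.fromBlocks₁₁ B D hA).mp hblock

theorem postCov_self_le (hc : IsPosSemidefKernel c) {ι : Type*} [Fintype ι] [DecidableEq ι]
    {σ : ℝ} (hσ : σ ≠ 0) (z : ι → E) (x : E) : postCov σ c z x x ≤ c x x := by
  have := (hc.posDef_gram_add hσ z).inv.posSemidef.dotProduct_mulVec_nonneg fun i => c x (z i)
  simp only [star_trivial] at this
  simp only [postCov]
  linarith

theorem postCov_sub_le (hc : IsPosSemidefKernel c) {ι : Type*} [Fintype ι] [DecidableEq ι]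
    {σ : ℝ} (hσ : σ ≠ 0) (z : ι → E) (x y : E) :
    postCov σ c z x x - postCov σ c z x y - postCov σ c z y x + postCov σ c z y y ≤
      c x x - c x y - c y x + c y y := by
  have := (hc.posDef_gram_add hσ z).inv.posSemidef.dotProduct_mulVec_nonneg
    ((fun i => c x (z i)) - fun i => c y (z i))
  simp only [star_trivial, mulVec_sub, dotProduct_sub, sub_dotProduct] at this
  simp only [postCov]
  linarith

theorem abs_postVar_sub_le (hc : IsPosSemidefKernel c) {m : ℕ} {σ C : ℝ} (hσ : σ ≠ 0)
    (hbd : ∀ x, c x x ≤ C) (z : Fin m → E) (x y : E) :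
    |postVar m σ c z x - postVar m σ c z y| ≤
      2 * √C * √(c x x - c x y - c y x + c y y) := by
  have hM := hc.posSemidef_postCov hσ z ![x, y]
  have hsqrt (p : E) : √(postCov σ c z p p) ≤ √C :=
    Real.sqrt_le_sqrt ((hc.postCov_self_le hσ z p).trans (hbd p))
  calc |postVar m σ c z x - postVar m σ c z y|
      ≤ (√(postCov σ c z x x) + √(postCov σ c z y y)) *
          √(postCov σ c z x x - postCov σ c z x y - postCov σ c z y x + postCov σ c z y y) := by
        simpa [postVar_eq_postCov] using hM.abs_sub_diag_le
    _ ≤ (√C + √C) * √(c x x - c x y - c y x + c y y) :=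
        mul_le_mul (add_le_add (hsqrt x) (hsqrt y))
          (Real.sqrt_le_sqrt (hc.postCov_sub_le hσ z x y)) (Real.sqrt_nonneg _) (by positivity)
    _ = 2 * √C * √(c x x - c x y - c y x + c y y) := by rw [two_mul]

end IsPosSemidefKernel

theorem stmt_11_general (d m : ℕ)
    (C σ L α : ℝ) (hσ : 0 < σ)
    (c : EuclideanSpace ℝ (Fin d) → EuclideanSpace ℝ (Fin d) → ℝ)
    (hpsd : ∀ (k : ℕ) (z : Fin k → EuclideanSpace ℝ (Fin d)),
      (Matrix.of fun i j => c (z i) (z j)).PosSemidef)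
    (hbd : ∀ x, c x x ≤ C)
    (hhol : ∀ x y z : EuclideanSpace ℝ (Fin d), |c x y - c x z| ≤ L * ‖y - z‖ ^ α)
    (z : Fin m → EuclideanSpace ℝ (Fin d)) :
    ∀ x y : EuclideanSpace ℝ (Fin d),
      |postVar m σ c z x - postVar m σ c z y| ≤
        2 * Real.sqrt (2 * C * L) * ‖x - y‖ ^ (α / 2) := by
  intro x y
  have hc : IsPosSemidefKernel c := hpsd
  have hC_nonneg : 0 ≤ C := (hc.self_nonneg x).trans (hbd x)
  have hdist : c x x - c x y - c y x + c y y ≤ 2 * L * ‖x - y‖ ^ α := by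
    have hx := (abs_le.mp (hhol x x y)).2
    have hy := (abs_le.mp (hhol y y x)).2
    rw [norm_sub_rev] at hy
    linarith
  calc |postVar m σ c z x - postVar m σ c z y|
      ≤ 2 * √C * √(c x x - c x y - c y x + c y y) := hc.abs_postVar_sub_le hσ.ne' hbd z x y
    _ ≤ 2 * √C * √(2 * L * ‖x - y‖ ^ α) := by gcongr
    _ = 2 * √(2 * C * L) * ‖x - y‖ ^ (α / 2) := by
      rw [show 2 * C * L = C * (2 * L) by ring, Real.sqrt_mul hC_nonneg,
        Real.sqrt_mul' _ (by positivity), Real.sqrt_eq_rpow (‖x - y‖ ^ α),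
        ← Real.rpow_mul (norm_nonneg _)]
      ring_nf

theorem stmt_11 (d m : ℕ) (hd : 0 < d) (hm : 0 < m)
    (C σ L α : ℝ) (hC : 0 < C) (hσ : 0 < σ) (hL : 0 < L) (hα : α ∈ Set.Ioc (0 : ℝ) 1)
    (c : EuclideanSpace ℝ (Fin d) → EuclideanSpace ℝ (Fin d) → ℝ)
    (hsymm : ∀ x y, c x y = c y x)
    (hpsd : ∀ (k : ℕ) (z : Fin k → EuclideanSpace ℝ (Fin d)),
      (Matrix.of fun i j => c (z i) (z j)).PosSemidef)
    (hbd : ∀ x, c x x ≤ C)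
    (hhol : ∀ x y z : EuclideanSpace ℝ (Fin d), |c x y - c x z| ≤ L * ‖y - z‖ ^ α)
    (z : Fin m → EuclideanSpace ℝ (Fin d)) :
    ∀ x y : EuclideanSpace ℝ (Fin d),
      |postVar m σ c z x - postVar m σ c z y| ≤
        2 * Real.sqrt (2 * C * L) * ‖x - y‖ ^ (α / 2) :=
  stmt_11_general d m C σ L α hσ c hpsd hbd hhol z
end

section
/- Let C > 0, L > 0, R > 0, α ∈ (0, 1], and let d be a positive integer. Then ∫₀^{2√C} √( d · log( 1 + 2R·(2L)^{1/α} / ε^{2/α} ) ) dε ≤ 2√2 · α^{−1/2} · √( C · d · log( 5 + 5·R^α·L/C ) ). -/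
/-!
With `s = 2√C` and `A = 2R(2L)^{1/α} / s^{2/α}`, the integrand at `ε ∈ (0, s]` is at most
`√d (√(log (1 + A)) + √(2/α) √(log (s/ε)))`, because
`log (1 + A (s/ε)^{2/α}) ≤ log (1 + A) + (2/α) log (s/ε)`. The substitution `ε = s e^{-x}` turns
`∫₀ˢ √(log (s/ε)) dε` into `s Γ(3/2) = s √π / 2`. Merging the two square roots costs a factor `√2`,
and the constant is absorbed since `α log (1 + A) ≤ log (1 + A^α) ≤ log (1 + R^α L / C)`
(subadditivity of `t ↦ t^α`) and `π/2 ≤ log 5`.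
-/

open MeasureTheory Set Real

theorem sqrt_add_le_sqrt_add_sqrt {x y : ℝ} (hx : 0 ≤ x) (hy : 0 ≤ y) :
    √(x + y) ≤ √x + √y := by
  rw [sqrt_le_iff]
  refine ⟨by positivity, ?_⟩
  nlinarith [sq_sqrt hx, sq_sqrt hy, sqrt_nonneg x, sqrt_nonneg y]

theorem sqrt_add_sqrt_le_sqrt_two_mul {x y : ℝ} (hx : 0 ≤ x) (hy : 0 ≤ y) :
    √x + √y ≤ √2 * √(x + y) := by
  rw [← sqrt_mul zero_le_two, le_sqrt (by positivity) (by positivity)]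
  nlinarith [sq_sqrt hx, sq_sqrt hy, sq_nonneg (√x - √y)]

theorem exp_pi_div_two_le_five : exp (π / 2) ≤ 5 := by
  have hπ : π / 4 ≤ 0.7854 := by linarith [pi_lt_d4]
  have hexp : exp 0.7854 ≤ 2.1945 := by
    refine (exp_bound' (n := 4) (by norm_num) (by norm_num) (by norm_num)).trans ?_
    norm_num [Finset.sum_range_succ, Nat.factorial]
  have hsq : exp (π / 2) = exp (π / 4) ^ 2 := by rw [sq, ← exp_add]; ring_nf
  rw [hsq]
  nlinarith [exp_le_exp.2 hπ, exp_pos (π / 4)]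

theorem mul_log_one_add_le_log_one_add_rpow {x α : ℝ} (hx : 0 ≤ x) (hα0 : 0 ≤ α) (hα1 : α ≤ 1) :
    α * log (1 + x) ≤ log (1 + x ^ α) := by
  rw [← log_rpow (by positivity)]
  refine log_le_log (by positivity) ?_
  simpa using rpow_add_le_add_rpow zero_le_one hx hα0 hα1

theorem integrableOn_exp_neg_mul_sqrt : IntegrableOn (fun x ↦ exp (-x) * √x) (Ioi 0) :=
  (GammaIntegral_convergent (by norm_num : (0 : ℝ) < 3 / 2)).congr_fun
    (fun x _ ↦ by norm_num [sqrt_eq_rpow]) measurableSet_Ioi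

theorem integral_exp_neg_mul_sqrt : ∫ x in Ioi 0, exp (-x) * √x = √π / 2 := by
  have hΓ : Gamma (1 / 2 + 1) = √π / 2 := by
    rw [Gamma_add_one (by norm_num), Gamma_one_half_eq]; ring
  rw [← hΓ, Gamma_eq_integral (by norm_num)]
  exact setIntegral_congr_fun measurableSet_Ioi (fun x _ ↦ by norm_num [sqrt_eq_rpow])

section Substitution

variable {s : ℝ}

theorem image_const_mul_exp_neg_Ioi (hs : 0 < s) : (fun x ↦ s * exp (-x)) '' Ioi 0 = Ioo 0 s := by
  ext y
  simp only [mem_image, mem_Ioi, mem_Ioo]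
  constructor
  · rintro ⟨x, hx, rfl⟩
    exact ⟨by positivity, mul_lt_of_lt_one_right hs (exp_lt_one_iff.2 (neg_lt_zero.2 hx))⟩
  · rintro ⟨hy0, hys⟩
    refine ⟨log (s / y), log_pos ((one_lt_div hy0).2 hys), ?_⟩
    rw [exp_neg, exp_log (by positivity)]
    field_simp

theorem hasDerivWithinAt_const_mul_exp_neg (x : ℝ) :
    HasDerivWithinAt (fun x ↦ s * exp (-x)) (-(s * exp (-x))) (Ioi 0) x :=
  (((hasDerivAt_id x).neg.exp.const_mul s).congr_deriv (by simp)).hasDerivWithinAt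

theorem injOn_const_mul_exp_neg (hs : 0 < s) : InjOn (fun x ↦ s * exp (-x)) (Ioi 0) :=
  fun _ _ _ _ h ↦ neg_injective (exp_injective (mul_left_cancel₀ hs.ne' h))

theorem abs_deriv_smul_sqrt_log_div (hs : 0 < s) (x : ℝ) :
    |-(s * exp (-x))| • √(log (s / (s * exp (-x)))) = s * (exp (-x) * √x) := by
  rw [exp_neg, div_mul_cancel_left₀ hs.ne', inv_inv, log_exp, abs_neg,
    abs_of_pos (by positivity), smul_eq_mul, mul_assoc]

theorem integrableOn_sqrt_log_div (hs : 0 < s) :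
    IntegrableOn (fun ε ↦ √(log (s / ε))) (Ioc 0 s) := by
  refine IntegrableOn.congr_set_ae ?_ Ioo_ae_eq_Ioc.symm
  rw [← image_const_mul_exp_neg_Ioi hs, integrableOn_image_iff_integrableOn_abs_deriv_smul
    measurableSet_Ioi (fun x _ ↦ hasDerivWithinAt_const_mul_exp_neg x) (injOn_const_mul_exp_neg hs)]
  exact IntegrableOn.congr_fun (integrableOn_exp_neg_mul_sqrt.const_mul s)
    (fun x _ ↦ (abs_deriv_smul_sqrt_log_div hs x).symm) measurableSet_Ioi

theorem integral_sqrt_log_div (hs : 0 < s) : ∫ ε in Ioc 0 s, √(log (s / ε)) = s * (√π / 2) := by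
  rw [integral_Ioc_eq_integral_Ioo, ← image_const_mul_exp_neg_Ioi hs,
    integral_image_eq_integral_abs_deriv_smul measurableSet_Ioi
      (fun x _ ↦ hasDerivWithinAt_const_mul_exp_neg x) (injOn_const_mul_exp_neg hs),
    setIntegral_congr_fun measurableSet_Ioi (fun x _ ↦ abs_deriv_smul_sqrt_log_div hs x),
    integral_const_mul, integral_exp_neg_mul_sqrt]

end Substitution

theorem log_one_add_div_rpow_le {K p s ε : ℝ} (hK : 0 ≤ K) (hp : 0 ≤ p) (hε : 0 < ε)
    (hεs : ε ≤ s) : log (1 + K / ε ^ p) ≤ log (1 + K / s ^ p) + p * log (s / ε) := by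
  have hs : 0 < s := hε.trans_le hεs
  have hratio : 1 ≤ (s / ε) ^ p := one_le_rpow ((one_le_div hε).2 hεs) hp
  have hsplit : K / ε ^ p = K / s ^ p * (s / ε) ^ p := by
    rw [div_rpow hs.le hε.le]
    field_simp
  rw [← log_rpow (by positivity), ← log_mul (by positivity) (by positivity)]
  refine log_le_log (by positivity) ?_
  rw [hsplit]
  nlinarith [div_nonneg hK (rpow_nonneg hs.le p)]

theorem integral_sqrt_mul_log_one_add_div_rpow_le {c K p s : ℝ} (hc : 0 ≤ c) (hK : 0 ≤ K)
    (hp : 0 ≤ p) (hs : 0 < s) :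
    ∫ ε in Ioc 0 s, √(c * log (1 + K / ε ^ p)) ≤
      s * √c * (√(log (1 + K / s ^ p)) + √(π * p / 4)) := by
  set a := log (1 + K / s ^ p)
  have ha : 0 ≤ a := log_nonneg (le_add_of_nonneg_right (by positivity))
  have hbound : ∀ ε ∈ Ioc 0 s,
      √(c * log (1 + K / ε ^ p)) ≤ √c * √a + √c * √p * √(log (s / ε)) := by
    rintro ε ⟨hε, hεs⟩
    have hlog : 0 ≤ log (s / ε) := log_nonneg ((one_le_div hε).2 hεs)
    calc √(c * log (1 + K / ε ^ p)) ≤ √(c * (a + p * log (s / ε))) :=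
          sqrt_le_sqrt (mul_le_mul_of_nonneg_left (log_one_add_div_rpow_le hK hp hε hεs) hc)
      _ ≤ √c * (√a + √(p * log (s / ε))) := by
          rw [sqrt_mul hc]
          gcongr
          exact sqrt_add_le_sqrt_add_sqrt ha (by positivity)
      _ = √c * √a + √c * √p * √(log (s / ε)) := by rw [sqrt_mul hp]; ring
  have hconst : IntegrableOn (fun _ ↦ √c * √a) (Ioc 0 s) :=
    integrableOn_const measure_Ioc_lt_top.ne
  have hlog : IntegrableOn (fun ε ↦ √c * √p * √(log (s / ε))) (Ioc 0 s) :=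
    (integrableOn_sqrt_log_div hs).const_mul _
  have hπp : √(π * p / 4) = √p * (√π / 2) := by
    rw [show π * p / 4 = p * π / 2 ^ 2 by ring, sqrt_div (by positivity), sqrt_sq zero_le_two,
      sqrt_mul hp]
    ring
  calc _ ≤ ∫ ε in Ioc 0 s, (√c * √a + √c * √p * √(log (s / ε))) :=
        setIntegral_mono_of_nonneg (fun _ _ ↦ sqrt_nonneg _) hbound (hconst.add hlog)
    _ = s * √c * (√a + √(π * p / 4)) := by
        rw [integral_add hconst hlog, setIntegral_const, integral_const_mul,
          integral_sqrt_log_div hs, measureReal_def, volume_Ioc, sub_zero,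
          ENNReal.toReal_ofReal hs.le, smul_eq_mul, hπp]
        ring

theorem mul_log_one_add_add_pi_div_two_le {C L R α : ℝ} (hC : 0 < C) (hL : 0 ≤ L) (hR : 0 ≤ R)
    (hα0 : 0 < α) (hα1 : α ≤ 1) :
    α * log (1 + 2 * R * (2 * L) ^ (1 / α) / (2 * √C) ^ (2 / α)) + π / 2 ≤
      log (5 + 5 * R ^ α * L / C) := by
  set A := 2 * R * (2 * L) ^ (1 / α) / (2 * √C) ^ (2 / α)
  have hA : 0 ≤ A := by positivity
  have hAα : A ^ α = 2 ^ α * R ^ α * L / (2 * C) := by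
    rw [div_rpow (by positivity) (by positivity), mul_rpow (by positivity) (by positivity),
      mul_rpow zero_le_two hR, ← rpow_mul (by positivity), ← rpow_mul (by positivity),
      one_div_mul_cancel hα0.ne', div_mul_cancel₀ _ hα0.ne', rpow_one, rpow_two, mul_pow,
      sq_sqrt hC.le]
    field_simp
  have hAα_le : A ^ α ≤ R ^ α * L / C := by
    have h2 : (2 : ℝ) ^ α ≤ 2 := by
      simpa using rpow_le_rpow_of_exponent_le one_le_two hα1
    rw [hAα, div_le_div_iff₀ (by positivity) hC]
    have : 0 ≤ R ^ α * L * C := by positivity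
    nlinarith
  have hπ : π / 2 ≤ log 5 := (le_log_iff_exp_le (by norm_num)).2 exp_pi_div_two_le_five
  calc α * log (1 + A) + π / 2 ≤ log (1 + A ^ α) + log 5 :=
        add_le_add (mul_log_one_add_le_log_one_add_rpow hA hα0.le hα1) hπ
    _ ≤ log (1 + R ^ α * L / C) + log 5 := by gcongr
    _ = log (5 + 5 * R ^ α * L / C) := by
        rw [← log_mul (by positivity) (by norm_num)]
        congr 1
        ring

theorem stmt_16_general (C L R α : ℝ) (d : ℕ) (hC : 0 < C) (hL : 0 < L) (hR : 0 < R)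
    (hα : α ∈ Set.Ioc (0 : ℝ) 1) :
    (∫ ε in Set.Ioc (0 : ℝ) (2 * Real.sqrt C),
        Real.sqrt ((d : ℝ) *
          Real.log (1 + 2 * R * (2 * L) ^ ((1 : ℝ) / α) / ε ^ ((2 : ℝ) / α)))) ≤
      2 * Real.sqrt 2 * α ^ (-(1 : ℝ) / 2) *
        Real.sqrt (C * d * Real.log (5 + 5 * R ^ α * L / C)) := by
  obtain ⟨hα0, hα1⟩ := hα
  set s := 2 * √C
  set a := log (1 + 2 * R * (2 * L) ^ ((1 : ℝ) / α) / s ^ ((2 : ℝ) / α))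
  set M := log (5 + 5 * R ^ α * L / C)
  have hs : 0 < s := by positivity
  have ha : 0 ≤ a := log_nonneg (le_add_of_nonneg_right (by positivity))
  have hM : a + π * (2 / α) / 4 ≤ α⁻¹ * M := by
    rw [le_inv_mul_iff₀ hα0]
    calc α * (a + π * (2 / α) / 4) = α * a + π / 2 := by field_simp; ring
      _ ≤ M := mul_log_one_add_add_pi_div_two_le hC hL.le hR.le hα0 hα1
  calc _ ≤ s * √d * (√a + √(π * (2 / α) / 4)) :=
        integral_sqrt_mul_log_one_add_div_rpow_le d.cast_nonneg (by positivity) (by positivity) hs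
    _ ≤ s * √d * (√2 * √(α⁻¹ * M)) := by
        gcongr
        exact (sqrt_add_sqrt_le_sqrt_two_mul ha (by positivity)).trans (by gcongr)
    _ = _ := by
        rw [sqrt_mul (inv_nonneg.2 hα0.le), sqrt_inv, sqrt_mul (by positivity), sqrt_mul hC.le,
          show -(1 : ℝ) / 2 = -(1 / 2) by norm_num, rpow_neg hα0.le, ← sqrt_eq_rpow]
        ring

theorem stmt_16 (C L R α : ℝ) (d : ℕ) (hC : 0 < C) (hL : 0 < L) (hR : 0 < R)
    (hα : α ∈ Set.Ioc (0 : ℝ) 1) (hd : 0 < d) :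
    (∫ ε in Set.Ioc (0 : ℝ) (2 * Real.sqrt C),
        Real.sqrt ((d : ℝ) *
          Real.log (1 + 2 * R * (2 * L) ^ ((1 : ℝ) / α) / ε ^ ((2 : ℝ) / α)))) ≤
      2 * Real.sqrt 2 * α ^ (-(1 : ℝ) / 2) *
        Real.sqrt (C * d * Real.log (5 + 5 * R ^ α * L / C)) :=
  stmt_16_general C L R α d hC hL hR hα
end
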